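/- Let (Φ, X⁰_α, X⁰_β, ξ) be a surface datum in S³ over a domain V ⊆ ℝ², and let a₁, a₂, b₁, b₂, c₁, c₂ be smooth real functions on V such that, as equalities of ℝ⁴-valued maps, Φ_x = −a₁ X⁰_α, Φ_y = −a₂ X⁰_β, ξ_x = b₁ X⁰_α, ξ_y = b₂ X⁰_β, (X⁰_β)_x = c₁ X⁰_α and (X⁰_α)_y = c₂ X⁰_β on V. Then (a₁)_y = c₁ a₂, (b₁)_y = c₁ b₂, (a₂)_x = c₂ a₁ and (b₂)_x = c₂ b₁ on V. (Lemma 5.1.) -/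

import Mathlib

noncomputable section

open Real
open scoped RealInnerProductSpace

/-- Partial derivative in the `x`-direction of a map on `ℝ² = ℝ × ℝ`. -/
def qx {E : Type*} [NormedAddCommGroup E] [NormedSpace ℝ E]
    (f : ℝ × ℝ → E) : ℝ × ℝ → E := fun q => fderiv ℝ f q (1, 0)

/-- Partial derivative in the `y`-direction of a map on `ℝ² = ℝ × ℝ`. -/
def qy {E : Type*} [NormedAddCommGroup E] [NormedSpace ℝ E]
    (f : ℝ × ℝ → E) : ℝ × ℝ → E := fun q => fderiv ℝ f q (0, 1)

/-- Euclidean 4-space. -/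
abbrev E4 := EuclideanSpace ℝ (Fin 4)

/-- A surface datum in `S³` over `V`: at each point of `V` the quadruple
`{X⁰_α, X⁰_β, ξ, Φ}` is orthonormal in `ℝ⁴`. -/
def IsSurfaceDatum (V : Set (ℝ × ℝ)) (Φ Xa Xb ξ : ℝ × ℝ → E4) : Prop :=
  ∀ q ∈ V,
    ⟪Xa q, Xa q⟫ = 1 ∧ ⟪Xb q, Xb q⟫ = 1 ∧ ⟪ξ q, ξ q⟫ = 1 ∧ ⟪Φ q, Φ q⟫ = 1 ∧
    ⟪Xa q, Xb q⟫ = 0 ∧ ⟪Xa q, ξ q⟫ = 0 ∧ ⟪Xa q, Φ q⟫ = 0 ∧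
    ⟪Xb q, ξ q⟫ = 0 ∧ ⟪Xb q, Φ q⟫ = 0 ∧ ⟪ξ q, Φ q⟫ = 0

/-- Cross derivatives commute for smooth maps on an open set. -/
lemma crossDeriv {V : Set (ℝ × ℝ)} (hV : IsOpen V) {f : ℝ × ℝ → E4}
    (hf : ContDiffOn ℝ (⊤ : ℕ∞) f V) {q : ℝ × ℝ} (hq : q ∈ V) :
    fderiv ℝ (qx f) q (0, 1) = fderiv ℝ (qy f) q (1, 0) := by
  have hmem : V ∈ nhds q := hV.mem_nhds hq
  have hfa : ContDiffAt ℝ (⊤ : ℕ∞) f q := hf.contDiffAt hmem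
  have hsym : IsSymmSndFDerivAt ℝ f q := hfa.isSymmSndFDerivAt (by rw [minSmoothness_of_isRCLikeNormedField]; exact WithTop.coe_le_coe.mpr le_top)
  have hd : DifferentiableAt ℝ (fderiv ℝ f) q :=
    (hfa.fderiv_right (m := 1) ((WithTop.coe_le_coe.mpr le_top))).differentiableAt one_ne_zero
  have hx : fderiv ℝ (qx f) q = (fderiv ℝ (fderiv ℝ f) q).flip (1, 0) := by
    have := fderiv_clm_apply (c := fderiv ℝ f) (u := fun _ => ((1 : ℝ), (0 : ℝ)))
      hd (differentiableAt_const _)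
    unfold qx; simpa [fderiv_const] using this
  have hy : fderiv ℝ (qy f) q = (fderiv ℝ (fderiv ℝ f) q).flip (0, 1) := by
    have := fderiv_clm_apply (c := fderiv ℝ f) (u := fun _ => ((0 : ℝ), (1 : ℝ)))
      hd (differentiableAt_const _)
    unfold qy; simpa [fderiv_const] using this
  rw [hx, hy]
  exact hsym.eq (0, 1) (1, 0)

/-- The main computation, for a single frame field `f` with `qx f = u • Xa`, `qy f = v • Xb`. -/
lemma aux_key {V : Set (ℝ × ℝ)} (hV : IsOpen V) {f Xa Xb : ℝ × ℝ → E4}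
    {u v c₁ c₂ : ℝ × ℝ → ℝ}
    (hf : ContDiffOn ℝ (⊤ : ℕ∞) f V) (hXa : ContDiffOn ℝ (⊤ : ℕ∞) Xa V) (hXb : ContDiffOn ℝ (⊤ : ℕ∞) Xb V)
    (hu : ContDiffOn ℝ (⊤ : ℕ∞) u V) (hv : ContDiffOn ℝ (⊤ : ℕ∞) v V)
    (hux : ∀ p ∈ V, qx f p = u p • Xa p) (hvy : ∀ p ∈ V, qy f p = v p • Xb p)
    {q : ℝ × ℝ} (hq : q ∈ V)
    (hXbx : qx Xb q = c₁ q • Xa q) (hXay : qy Xa q = c₂ q • Xb q)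
    (haa : ⟪Xa q, Xa q⟫ = 1) (hbb : ⟪Xb q, Xb q⟫ = 1) (hab : ⟪Xa q, Xb q⟫ = 0) :
    qy u q = c₁ q * v q ∧ qx v q = c₂ q * u q := by
  have hmem : V ∈ nhds q := hV.mem_nhds hq
  have hdu : DifferentiableAt ℝ u q := (hu.contDiffAt hmem).differentiableAt (by simp)
  have hdv : DifferentiableAt ℝ v q := (hv.contDiffAt hmem).differentiableAt (by simp)
  have hdXa : DifferentiableAt ℝ Xa q := (hXa.contDiffAt hmem).differentiableAt (by simp)
  have hdXb : DifferentiableAt ℝ Xb q := (hXb.contDiffAt hmem).differentiableAt (by simp)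
  have e1 : qx f =ᶠ[nhds q] fun p => u p • Xa p :=
    Filter.eventuallyEq_of_mem hmem hux
  have e2 : qy f =ᶠ[nhds q] fun p => v p • Xb p :=
    Filter.eventuallyEq_of_mem hmem hvy
  have hL : fderiv ℝ (qx f) q (0, 1) = qy u q • Xa q + (u q * c₂ q) • Xb q := by
    rw [e1.fderiv_eq, fderiv_fun_smul hdu hdXa]
    simp only [ContinuousLinearMap.add_apply, ContinuousLinearMap.smul_apply,
      ContinuousLinearMap.smulRight_apply]
    have : fderiv ℝ Xa q (0, 1) = c₂ q • Xb q := hXay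
    rw [this, smul_smul]
    unfold qy
    ring_nf
    abel
  have hR : fderiv ℝ (qy f) q (1, 0) = qx v q • Xb q + (v q * c₁ q) • Xa q := by
    rw [e2.fderiv_eq, fderiv_fun_smul hdv hdXb]
    simp only [ContinuousLinearMap.add_apply, ContinuousLinearMap.smul_apply,
      ContinuousLinearMap.smulRight_apply]
    have : fderiv ℝ Xb q (1, 0) = c₁ q • Xa q := hXbx
    rw [this, smul_smul]
    unfold qx
    ring_nf
    abel
  have key : qy u q • Xa q + (u q * c₂ q) • Xb q
      = qx v q • Xb q + (v q * c₁ q) • Xa q := by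
    rw [← hL, ← hR]
    exact crossDeriv hV hf hq
  have hba : ⟪Xb q, Xa q⟫ = 0 := by rw [real_inner_comm]; exact hab
  constructor
  · have h := congrArg (fun z => ⟪z, Xa q⟫) key
    simp only [inner_add_left, real_inner_smul_left, haa, hab, hba, mul_one,
      mul_zero, add_zero, zero_add] at h
    linear_combination h
  · have h := congrArg (fun z => ⟪z, Xb q⟫) key
    simp only [inner_add_left, real_inner_smul_left, hbb, hab, hba, mul_one,
      mul_zero, add_zero, zero_add] at h
    linear_combination -h

/-- Lemma 5.1. -/
theorem stmt_17 (V : Set (ℝ × ℝ)) (hVopen : IsOpen V) (hVconn : IsConnected V)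
    (Φ Xa Xb ξ : ℝ × ℝ → E4)
    (hdatum : IsSurfaceDatum V Φ Xa Xb ξ)
    (hΦ : ContDiffOn ℝ (⊤ : ℕ∞) Φ V) (hXa : ContDiffOn ℝ (⊤ : ℕ∞) Xa V)
    (hXb : ContDiffOn ℝ (⊤ : ℕ∞) Xb V) (hξ : ContDiffOn ℝ (⊤ : ℕ∞) ξ V)
    (a₁ a₂ b₁ b₂ c₁ c₂ : ℝ × ℝ → ℝ)
    (ha₁ : ContDiffOn ℝ (⊤ : ℕ∞) a₁ V) (ha₂ : ContDiffOn ℝ (⊤ : ℕ∞) a₂ V)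
    (hb₁ : ContDiffOn ℝ (⊤ : ℕ∞) b₁ V) (hb₂ : ContDiffOn ℝ (⊤ : ℕ∞) b₂ V)
    (hc₁ : ContDiffOn ℝ (⊤ : ℕ∞) c₁ V) (hc₂ : ContDiffOn ℝ (⊤ : ℕ∞) c₂ V)
    (hΦx : ∀ q ∈ V, qx Φ q = (-a₁ q) • Xa q)
    (hΦy : ∀ q ∈ V, qy Φ q = (-a₂ q) • Xb q)
    (hξx : ∀ q ∈ V, qx ξ q = b₁ q • Xa q)
    (hξy : ∀ q ∈ V, qy ξ q = b₂ q • Xb q)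
    (hXbx : ∀ q ∈ V, qx Xb q = c₁ q • Xa q)
    (hXay : ∀ q ∈ V, qy Xa q = c₂ q • Xb q) :
    ∀ q ∈ V,
      qy a₁ q = c₁ q * a₂ q ∧ qy b₁ q = c₁ q * b₂ q ∧
      qx a₂ q = c₂ q * a₁ q ∧ qx b₂ q = c₂ q * b₁ q := by
  intro q hq
  obtain ⟨haa, hbb, -, -, hab, -, -, -, -, -⟩ := hdatum q hq
  have hΦpair := aux_key hVopen hΦ hXa hXb (ha₁.neg) (ha₂.neg)
    (fun p hp => hΦx p hp) (fun p hp => hΦy p hp) hq (hXbx q hq) (hXay q hq)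
    haa hbb hab
  have hξpair := aux_key hVopen hξ hXa hXb hb₁ hb₂
    hξx hξy hq (hXbx q hq) (hXay q hq) haa hbb hab
  have hna : qy (fun p => -a₁ p) q = -(qy a₁ q) := by
    unfold qy; rw [fderiv_fun_neg]; simp
  have hnb : qx (fun p => -a₂ p) q = -(qx a₂ q) := by
    unfold qx; rw [fderiv_fun_neg]; simp
  refine ⟨?_, hξpair.1, ?_, hξpair.2⟩
  · have h := hΦpair.1
    rw [hna] at h
    nlinarith [h]
  · have h := hΦpair.2
    rw [hnb] at h
    nlinarith [h]
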